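/- arXiv:1711.10692 — 2 statements merged into one kernel-verified Lean document; each statement's English description precedes it below -/
import Mathlib

section
/- Let p_1, …, p_L ∈ [0,1] and let Z_1, …, Z_L be independent random variables where Z_i takes value 2 with probability p_i(1 − p_i), value 1 with probability (1 − p_i)², and value 0 with probability p_i. For ℓ ∈ {1, …, L} let M_ℓ = ∏_{i=1}^{ℓ} Z_i. Then for every natural number r ≥ 0, the probability that there exists ℓ ∈ {1, …, L} with M_ℓ > 2^r is at most L·2^{−r}. -/
open MeasureTheory ProbabilityTheory
open scoped ENNReal

/-!
Each `Z i` has mean `(1 - p) ^ 2 + 2 p (1 - p) = 1 - p ^ 2 ≤ 1`, so by independence every prefix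
product has mean at most `1`, and Markov's inequality bounds `P(M_ℓ > 2 ^ r)` by `2 ^ (-r)`; a
union bound over `ℓ` finishes. The `Z i` are not assumed measurable, but since the masses of
their three level sets add up to `1`, each level set is null measurable, which is enough.
-/

section

variable {Ω : Type*} [MeasurableSpace Ω] {μ : Measure Ω}

theorem nullMeasurableSet_of_compl_subset_of_measure_add_le [IsFiniteMeasure μ] {s t : Set Ω}
    (hst : sᶜ ⊆ t) (h : μ s + μ t ≤ μ Set.univ) : NullMeasurableSet s μ := by
  obtain ⟨T, hsT, hTm, hμT⟩ := exists_measurable_superset μ s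
  obtain ⟨T', htT', hT'm, hμT'⟩ := exists_measurable_superset μ t
  have hcover : T ∪ T' = Set.univ :=
    Set.eq_univ_of_forall fun ω ↦ by
      by_cases hω : ω ∈ s
      · exact Or.inl (hsT hω)
      · exact Or.inr (htT' (hst hω))
  -- `μ T + μ T' ≤ μ (T ∪ T')`, so the overlap `T ∩ T'`, which contains `T \ s`, is null.
  have hoverlap : μ (T ∩ T') = 0 := by
    have hadd := measure_union_add_inter (μ := μ) T hT'm
    rw [hcover, hμT, hμT'] at hadd
    refine nonpos_iff_eq_zero.mp ((ENNReal.add_le_add_iff_left (measure_ne_top μ Set.univ)).mp ?_)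
    rwa [add_zero, hadd]
  have hdiff : μ (T \ s) = 0 :=
    measure_mono_null (show T \ s ⊆ T ∩ T' from fun ω hω ↦ ⟨hω.1, htT' (hst hω.2)⟩) hoverlap
  rw [← Set.sdiff_sdiff_cancel_left hsT]
  exact hTm.nullMeasurableSet.diff (.of_null hdiff)

theorem lintegral_prod_eq_prod_lintegral_of_iIndepFun₀ {ι : Type*} (s : Finset ι)
    {X : ι → Ω → ℝ≥0∞} (hX : iIndepFun X μ) (hXm : ∀ i, AEMeasurable (X i) μ) :
    ∫⁻ ω, ∏ i ∈ s, X i ω ∂μ = ∏ i ∈ s, ∫⁻ ω, X i ω ∂μ := by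
  choose Y hYm hXY using hXm
  calc ∫⁻ ω, ∏ i ∈ s, X i ω ∂μ = ∫⁻ ω, ∏ i ∈ s, Y i ω ∂μ := by
        refine lintegral_congr_ae ?_
        filter_upwards [(Filter.eventually_all_finset s).mpr fun i _ ↦ hXY i] with ω hω
        exact Finset.prod_congr rfl hω
    _ = ∏ i ∈ s, ∫⁻ ω, Y i ω ∂μ :=
        lintegral_prod_eq_prod_lintegral_of_indepFun s Y (hX.congr hXY) hYm
    _ = ∏ i ∈ s, ∫⁻ ω, X i ω ∂μ :=
        Finset.prod_congr rfl fun i _ ↦ (lintegral_congr_ae (hXY i)).symm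

theorem measure_le_prod_le_inv_of_iIndepFun {ι : Type*} (s : Finset ι)
    {X : ι → Ω → ℝ≥0∞} (hX : iIndepFun X μ) (hXm : ∀ i, AEMeasurable (X i) μ)
    (hX1 : ∀ i, ∫⁻ ω, X i ω ∂μ ≤ 1) {c : ℝ≥0∞} (hc0 : c ≠ 0) (hc : c ≠ ∞) :
    μ {ω | c ≤ ∏ i ∈ s, X i ω} ≤ c⁻¹ := by
  have hprod : ∫⁻ ω, ∏ i ∈ s, X i ω ∂μ ≤ 1 := by
    rw [lintegral_prod_eq_prod_lintegral_of_iIndepFun₀ s hX hXm]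
    exact Finset.prod_le_one' fun i _ ↦ hX1 i
  calc μ {ω | c ≤ ∏ i ∈ s, X i ω} ≤ (∫⁻ ω, ∏ i ∈ s, X i ω ∂μ) / c :=
        meas_ge_le_lintegral_div (s.aemeasurable_fun_prod fun i _ ↦ hXm i) hc0 hc
    _ ≤ c⁻¹ := by simpa only [ENNReal.div_eq_inv_mul, mul_one] using mul_le_mul_right hprod c⁻¹

theorem nullMeasurableSet_eq_of_measure_add_measure_add_measure_le [IsProbabilityMeasure μ]
    {β : Type*} {X : Ω → β} {a b c : β} (hX : ∀ ω, X ω = a ∨ X ω = b ∨ X ω = c)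
    (h : μ {ω | X ω = a} + μ {ω | X ω = b} + μ {ω | X ω = c} ≤ 1) :
    NullMeasurableSet {ω | X ω = a} μ := by
  refine nullMeasurableSet_of_compl_subset_of_measure_add_le
    (t := {ω | X ω = b} ∪ {ω | X ω = c}) (fun ω hω ↦ (hX ω).resolve_left hω) ?_
  calc _ ≤ μ {ω | X ω = a} + (μ {ω | X ω = b} + μ {ω | X ω = c}) := by
        gcongr; exact measure_union_le _ _
    _ ≤ μ Set.univ := by rw [measure_univ, ← add_assoc]; exact h

structure IsTrinomial (μ : Measure Ω) (X : Ω → ℝ) (p : ℝ) : Prop where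
  mem_Icc : p ∈ Set.Icc (0 : ℝ) 1
  eq_or_eq_or_eq : ∀ ω, X ω = 0 ∨ X ω = 1 ∨ X ω = 2
  measure_eq_two : μ {ω | X ω = 2} = ENNReal.ofReal (p * (1 - p))
  measure_eq_one : μ {ω | X ω = 1} = ENNReal.ofReal ((1 - p) ^ 2)
  measure_eq_zero : μ {ω | X ω = 0} = ENNReal.ofReal p

namespace IsTrinomial

variable {X : Ω → ℝ} {p : ℝ}

theorem measure_add_measure_add_measure (hX : IsTrinomial μ X p) :
    μ {ω | X ω = 0} + μ {ω | X ω = 1} + μ {ω | X ω = 2} = 1 := by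
  obtain ⟨hp0, hp1⟩ := hX.mem_Icc
  rw [hX.measure_eq_zero, hX.measure_eq_one, hX.measure_eq_two,
    ← ENNReal.ofReal_add hp0 (by positivity), ← ENNReal.ofReal_add (by positivity)
      (mul_nonneg hp0 (by linarith)), ← ENNReal.ofReal_one]
  congr 1
  ring

theorem nonneg (hX : IsTrinomial μ X p) (ω : Ω) : 0 ≤ X ω := by
  rcases hX.eq_or_eq_or_eq ω with h | h | h <;> simp [h]

theorem ofReal_eq_indicator_add_indicator (hX : IsTrinomial μ X p) (ω : Ω) :
    ENNReal.ofReal (X ω) =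
      {ω | X ω = 1}.indicator (fun _ ↦ 1) ω + {ω | X ω = 2}.indicator (fun _ ↦ 2) ω := by
  rcases hX.eq_or_eq_or_eq ω with h | h | h <;> simp [Set.indicator, h]

variable [IsProbabilityMeasure μ]

theorem nullMeasurableSet_eq_one (hX : IsTrinomial μ X p) :
    NullMeasurableSet {ω | X ω = 1} μ :=
  nullMeasurableSet_eq_of_measure_add_measure_add_measure_le (b := 0) (c := 2)
    (fun ω ↦ by rcases hX.eq_or_eq_or_eq ω with h | h | h <;> simp [h])
    (by rw [add_comm (μ _)]; exact hX.measure_add_measure_add_measure.le)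

theorem nullMeasurableSet_eq_two (hX : IsTrinomial μ X p) :
    NullMeasurableSet {ω | X ω = 2} μ :=
  nullMeasurableSet_eq_of_measure_add_measure_add_measure_le (b := 0) (c := 1)
    (fun ω ↦ by rcases hX.eq_or_eq_or_eq ω with h | h | h <;> simp [h])
    (by rw [add_rotate]; exact hX.measure_add_measure_add_measure.le)

theorem aemeasurable_ofReal (hX : IsTrinomial μ X p) :
    AEMeasurable (fun ω ↦ ENNReal.ofReal (X ω)) μ := by
  simp_rw [hX.ofReal_eq_indicator_add_indicator]
  exact (aemeasurable_const.indicator₀ hX.nullMeasurableSet_eq_one).add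
    (aemeasurable_const.indicator₀ hX.nullMeasurableSet_eq_two)

theorem lintegral_ofReal (hX : IsTrinomial μ X p) :
    ∫⁻ ω, ENNReal.ofReal (X ω) ∂μ = ENNReal.ofReal (1 - p ^ 2) := by
  obtain ⟨hp0, hp1⟩ := hX.mem_Icc
  simp_rw [hX.ofReal_eq_indicator_add_indicator]
  rw [lintegral_add_left' (aemeasurable_const.indicator₀ hX.nullMeasurableSet_eq_one),
    lintegral_indicator_const₀ hX.nullMeasurableSet_eq_one,
    lintegral_indicator_const₀ hX.nullMeasurableSet_eq_two, hX.measure_eq_one,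
    hX.measure_eq_two, one_mul, ← ENNReal.ofReal_ofNat 2, ← ENNReal.ofReal_mul zero_le_two,
    ← ENNReal.ofReal_add (by positivity) (by nlinarith)]
  congr 1
  ring

theorem lintegral_ofReal_le_one (hX : IsTrinomial μ X p) :
    ∫⁻ ω, ENNReal.ofReal (X ω) ∂μ ≤ 1 :=
  hX.lintegral_ofReal ▸ ENNReal.ofReal_le_one.mpr (by nlinarith)

end IsTrinomial

end

/-- For independent random variables `Z₁, …, Z_L` where `Zᵢ` takes value `2`
with probability `pᵢ(1−pᵢ)`, value `1` with probability `(1−pᵢ)²`, and value `0`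
with probability `pᵢ`, letting `M_ℓ = ∏_{i≤ℓ} Zᵢ`, for every natural `r` the
probability that some `ℓ ∈ {1, …, L}` has `M_ℓ > 2^r` is at most `L · 2^{−r}`. -/
theorem max_product_tail_bound
    {Ω : Type*} [MeasurableSpace Ω] (μ : Measure Ω) [IsProbabilityMeasure μ]
    (L : ℕ) (p : Fin L → ℝ) (hp : ∀ i, p i ∈ Set.Icc (0 : ℝ) 1)
    (Z : Fin L → Ω → ℝ)
    (hind : iIndepFun Z μ)
    (hval : ∀ i ω, Z i ω = 0 ∨ Z i ω = 1 ∨ Z i ω = 2)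
    (h2 : ∀ i, μ {ω | Z i ω = 2} = ENNReal.ofReal (p i * (1 - p i)))
    (h1 : ∀ i, μ {ω | Z i ω = 1} = ENNReal.ofReal ((1 - p i) ^ 2))
    (h0 : ∀ i, μ {ω | Z i ω = 0} = ENNReal.ofReal (p i))
    (r : ℕ) :
    μ {ω | ∃ ℓ : ℕ, 1 ≤ ℓ ∧ ℓ ≤ L ∧
        (2 : ℝ) ^ r < ∏ i ∈ Finset.univ.filter (fun i : Fin L => (i : ℕ) < ℓ), Z i ω}
      ≤ (L : ℝ≥0∞) * (2 : ℝ≥0∞)⁻¹ ^ r := by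
  have hZ : ∀ i, IsTrinomial μ (Z i) (p i) := fun i ↦ ⟨hp i, hval i, h2 i, h1 i, h0 i⟩
  have hprod : ∀ s : Finset (Fin L),
      μ {ω | (2 : ℝ) ^ r < ∏ i ∈ s, Z i ω} ≤ (2 : ℝ≥0∞)⁻¹ ^ r := by
    intro s
    rw [← ENNReal.inv_pow]
    refine (measure_mono fun ω (hω : (2 : ℝ) ^ r < _) ↦ ?_).trans
      (measure_le_prod_le_inv_of_iIndepFun s
        (hind.comp (fun _ ↦ ENNReal.ofReal) fun _ ↦ ENNReal.measurable_ofReal)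
        (fun i ↦ (hZ i).aemeasurable_ofReal) (fun i ↦ (hZ i).lintegral_ofReal_le_one)
        (by simp) (by simp))
    show (2 : ℝ≥0∞) ^ r ≤ ∏ i ∈ s, ENNReal.ofReal (Z i ω)
    rw [← ENNReal.ofReal_prod_of_nonneg fun i _ ↦ (hZ i).nonneg ω]
    simpa using ENNReal.ofReal_le_ofReal hω.le
  calc _ ≤ μ (⋃ ℓ ∈ Finset.Icc 1 L,
          {ω | (2 : ℝ) ^ r < ∏ i ∈ Finset.univ.filter (fun i : Fin L => (i : ℕ) < ℓ), Z i ω}) :=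
        measure_mono <| by
          rintro ω ⟨ℓ, h1ℓ, hℓL, hω⟩
          exact Set.mem_biUnion (Finset.mem_Icc.mpr ⟨h1ℓ, hℓL⟩) hω
    _ ≤ ∑ ℓ ∈ Finset.Icc 1 L,
          μ {ω | (2 : ℝ) ^ r < ∏ i ∈ Finset.univ.filter (fun i : Fin L => (i : ℕ) < ℓ), Z i ω} :=
        measure_biUnion_finset_le _ _
    _ ≤ (Finset.Icc 1 L).card • (2 : ℝ≥0∞)⁻¹ ^ r :=
        Finset.sum_le_card_nsmul _ _ _ fun ℓ _ ↦ hprod _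
    _ = (L : ℝ≥0∞) * (2 : ℝ≥0∞)⁻¹ ^ r := by simp [nsmul_eq_mul]
end

section
/- Let k ≥ 2 be an integer, let c ≥ 1 be a real number, and let p ∈ [0,1) satisfy c·p ≤ 1 − 1/k. Then (1 − p)^{k·c} ≤ 1 − c·p; equivalently, 1 − (1 − p)^{k·c} ≥ c·p (here the exponent k·c is a real exponent). (This is the key inequality in the paper's Lemma that k·c independent copies of a Bernoulli process with biases p_i can be rejection-sampled into a process with biases c·p_i whenever c·p_i ≤ 1 − 1/k.) -/
/-!
Since `1 - p ≤ exp (-p)`, we have `(1 - p) ^ (k * c) ≤ exp (-(k * x))` with `x = c * p`. The map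
`x ↦ exp (-(k * x)) + x` is convex, equals `1` at `x = 0` and is at most `1` at `x = 1 - 1 / k`
(because `k ≤ exp (k - 1)`), so it stays below `1` on the whole interval `[0, 1 - 1 / k]`.
-/

open Real Set

theorem one_sub_rpow_le_exp_neg_mul {p a : ℝ} (hp : p ≤ 1) (ha : 0 ≤ a) :
    (1 - p) ^ a ≤ exp (-(a * p)) :=
  calc (1 - p) ^ a ≤ exp (-p) ^ a := rpow_le_rpow (by linarith) (one_sub_le_exp_neg p) ha
    _ = exp (-(a * p)) := by rw [← exp_mul]; ring_nf

theorem exp_neg_mul_le_one_sub {k x : ℝ} (hk : 0 < k) (hx₀ : 0 ≤ x) (hx : x ≤ 1 - 1 / k) :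
    exp (-(k * x)) ≤ 1 - x := by
  have hexp : ConvexOn ℝ univ fun y : ℝ ↦ exp (-(k * y)) := by
    simpa [Function.comp_def] using convexOn_exp.comp_linearMap (LinearMap.mul ℝ ℝ (-k))
  have hconvex := hexp.add (convexOn_id convex_univ)
  have hright : exp (-(k * (1 - 1 / k))) ≤ 1 / k := by
    rw [mul_sub, mul_one_div_cancel hk.ne', mul_one, exp_neg, inv_eq_one_div]
    gcongr
    linarith [add_one_le_exp (k - 1)]
  have hmax := hconvex.le_max_of_mem_Icc (mem_univ 0) (mem_univ _) ⟨hx₀, hx⟩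
  simp only [Pi.add_apply, id, mul_zero, neg_zero, exp_zero, add_zero] at hmax
  linarith [hmax.trans (max_le le_rfl (by linarith))]

/-- Amplification inequality: for an integer `k ≥ 2`, a real `c ≥ 1`, and
`p ∈ [0,1)` with `c·p ≤ 1 − 1/k`, we have `(1 − p)^{k·c} ≤ 1 − c·p`
(real exponent `k·c`); equivalently `1 − (1 − p)^{k·c} ≥ c·p`. -/
theorem amplified_bernoulli_success_probability
    (k : ℕ) (hk : 2 ≤ k) (c : ℝ) (hc : 1 ≤ c) (p : ℝ)
    (hp : p ∈ Set.Ico (0 : ℝ) 1) (hcp : c * p ≤ 1 - 1 / (k : ℝ)) :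
    (1 - p) ^ ((k : ℝ) * c) ≤ 1 - c * p ∧ c * p ≤ 1 - (1 - p) ^ ((k : ℝ) * c) := by
  have hk₀ : (0 : ℝ) < k := Nat.cast_pos.mpr (by omega)
  have hbound : (1 - p) ^ ((k : ℝ) * c) ≤ 1 - c * p :=
    calc (1 - p) ^ ((k : ℝ) * c) ≤ exp (-((k : ℝ) * c * p)) :=
          one_sub_rpow_le_exp_neg_mul hp.2.le (mul_nonneg hk₀.le (by linarith))
      _ = exp (-((k : ℝ) * (c * p))) := by rw [mul_assoc]
      _ ≤ 1 - c * p := exp_neg_mul_le_one_sub hk₀ (by nlinarith [hp.1]) hcp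
  exact ⟨hbound, by linarith⟩
end
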